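/- arXiv:1203.5232 — 3 statements merged into one kernel-verified Lean document; each statement's English description precedes it below -/
import Mathlib

section
/- Let G be a finite group, g ∈ G of order n, and k, m positive integers with k^m ≡ 1 (mod n). The Bass unit u_k,m(g) has finite multiplicative order in ℤG if and only if k ≡ ±1 (mod n). -/
/-!
Write `x` for `g` in `ℤG`, `n` for its order and `σ = 1 + x + ⋯ + x^(n-1)`, so that `xσ = σx = σ`
and `σ² = nσ`. If `k ≡ 1 (mod n)`, the sum `1 + x + ⋯ + x^(k-1)` lies in `1 + ℤσ`; if
`k ≡ -1`, it lies in `-x^k + ℤσ`. Hence the Bass unit lies in `1 + ℤσ`, or for even `m` in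
`x^(km) + ℤσ`, and the augmentation forces the `σ`-coefficient to vanish. For odd `m`, `k ≡ -1`
and `k^m ≡ 1` give `-1 ≡ 1`.

Conversely, pull the unit back to `ℤ[ℤ/n]` and evaluate at a primitive `n`-th root of unity `ζ`:
this kills `σ` and sends the unit to `S^m` with `S = 1 + ζ + ⋯ + ζ^(k-1)`. Finite order forces
`|S| = 1`, so `|ζ^k - 1| = |S| |ζ - 1| = |ζ - 1|`. Two points of the unit circle at the same
distance from `1` are equal or conjugate, so `ζ^k = ζ^(±1)`, that is, `k ≡ ±1 (mod n)`.
-/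

/-- The Bass unit `u_{k,m}(g)` in the integral group ring `ℤG`, with `n = |g|`. -/
noncomputable def bassElem {G : Type*} [Group G] (g : G) (k m : ℕ) :
    MonoidAlgebra ℤ G :=
  (∑ i ∈ Finset.range k, MonoidAlgebra.of ℤ G (g ^ i)) ^ m +
    ((1 - (k : ℤ) ^ m) / (orderOf g : ℤ)) •
      ∑ i ∈ Finset.range (orderOf g), MonoidAlgebra.of ℤ G (g ^ i)

open Finset MonoidAlgebra

section GeomSum

variable {R : Type*} [Ring R] {x : R} {n : ℕ}

theorem pow_mul_geom_sum_of_pow_eq_one (hx : x ^ n = 1) (a : ℕ) :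
    x ^ a * ∑ i ∈ range n, x ^ i = ∑ i ∈ range n, x ^ i := by
  have hx' : x * ∑ i ∈ range n, x ^ i = ∑ i ∈ range n, x ^ i := by
    rw [← sub_eq_zero, ← sub_one_mul, mul_geom_sum, hx, sub_self]
  induction a with
  | zero => rw [pow_zero, one_mul]
  | succ a ih => rw [pow_succ, mul_assoc, hx', ih]

theorem geom_sum_mul_pow_of_pow_eq_one (hx : x ^ n = 1) (a : ℕ) :
    (∑ i ∈ range n, x ^ i) * x ^ a = ∑ i ∈ range n, x ^ i := by
  rw [(Commute.sum_left _ _ _ fun i _ => Commute.pow_pow_self x i a).eq,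
    pow_mul_geom_sum_of_pow_eq_one hx]

theorem geom_sum_mul_self_of_pow_eq_one (hx : x ^ n = 1) :
    (∑ i ∈ range n, x ^ i) * ∑ i ∈ range n, x ^ i = n • ∑ i ∈ range n, x ^ i := by
  simp only [sum_mul, pow_mul_geom_sum_of_pow_eq_one hx, sum_const, card_range]

theorem geom_sum_add_mul_of_pow_eq_one (hx : x ^ n = 1) (a q : ℕ) :
    ∑ i ∈ range (a + n * q), x ^ i = ∑ i ∈ range a, x ^ i + q • ∑ i ∈ range n, x ^ i := by
  induction q with
  | zero => simp
  | succ q ih =>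
    rw [mul_add_one, ← add_assoc, sum_range_add, ih]
    simp only [pow_add, ← mul_sum, pow_mul_geom_sum_of_pow_eq_one hx, succ_nsmul, add_assoc]

theorem exists_geom_sum_eq_add_zsmul_of_modEq (hx : x ^ n = 1) {k k' : ℕ}
    (h : k ≡ k' [MOD n]) :
    ∃ q : ℤ, ∑ i ∈ range k, x ^ i = ∑ i ∈ range k', x ^ i + q • ∑ i ∈ range n, x ^ i := by
  have decomp (j : ℕ) : ∑ i ∈ range j, x ^ i =
      ∑ i ∈ range (j % n), x ^ i + (j / n) • ∑ i ∈ range n, x ^ i := by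
    conv_lhs => rw [← Nat.mod_add_div j n]
    exact geom_sum_add_mul_of_pow_eq_one hx _ _
  refine ⟨(k / n : ℕ) - (k' / n : ℕ), ?_⟩
  rw [decomp k, decomp k', h]
  module

theorem exists_pow_add_zsmul_geom_sum_pow (hx : x ^ n = 1) (a : ℕ) (q : ℤ) (m : ℕ) :
    ∃ c : ℤ, (x ^ a + q • ∑ i ∈ range n, x ^ i) ^ m =
      x ^ (a * m) + c • ∑ i ∈ range n, x ^ i := by
  induction m with
  | zero => exact ⟨0, by simp⟩
  | succ m ih =>
    obtain ⟨c, hc⟩ := ih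
    refine ⟨q + c + c * q * n, ?_⟩
    simp only [pow_succ, hc, mul_add, add_mul, ← pow_add, ← mul_add_one, smul_mul_assoc,
      mul_smul_comm, pow_mul_geom_sum_of_pow_eq_one hx, geom_sum_mul_pow_of_pow_eq_one hx,
      geom_sum_mul_self_of_pow_eq_one hx]
    module

end GeomSum

section Augmentation

variable {G : Type*} [Monoid G]

variable (G) in
noncomputable def augmentation : MonoidAlgebra ℤ G →+* ℤ :=
  (MonoidAlgebra.lift ℤ ℤ G 1).toRingHom

theorem augmentation_of (g : G) : augmentation G (of ℤ G g) = 1 := by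
  simp [augmentation]

theorem augmentation_geom_sum (g : G) (k : ℕ) :
    augmentation G (∑ i ∈ range k, of ℤ G g ^ i) = k := by
  simp only [map_sum, map_pow, augmentation_of, one_pow, sum_const, card_range, nsmul_one]

theorem of_pow_orderOf (g : G) : of ℤ G g ^ orderOf g = 1 := by
  rw [← map_pow, pow_orderOf_eq_one, map_one]

end Augmentation

section GroupRing

variable {G : Type*} [Group G]

theorem bassElem_eq_geom_sum (g : G) (k m : ℕ) :
    bassElem g k m = (∑ i ∈ range k, of ℤ G g ^ i) ^ m +
      ((1 - (k : ℤ) ^ m) / (orderOf g : ℤ)) • ∑ i ∈ range (orderOf g), of ℤ G g ^ i := by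
  simp only [bassElem, map_pow]

theorem augmentation_bassElem (g : G) {k m : ℕ} (h : k ^ m ≡ 1 [MOD orderOf g]) :
    augmentation G (bassElem g k m) = 1 := by
  have hdvd : (orderOf g : ℤ) ∣ 1 - (k : ℤ) ^ m := by
    simpa using (Int.natCast_modEq_iff.2 h).dvd
  rw [bassElem_eq_geom_sum, map_add, map_pow, map_zsmul, augmentation_geom_sum,
    augmentation_geom_sum, smul_eq_mul, Int.ediv_mul_cancel hdvd, add_sub_cancel]

theorem bassElem_eq_of_geom_sum_pow_eq {g : G} {k m : ℕ} (h : k ^ m ≡ 1 [MOD orderOf g])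
    {a : ℕ} {c : ℤ} (hS : (∑ i ∈ range k, of ℤ G g ^ i) ^ m =
      of ℤ G g ^ a + c • ∑ i ∈ range (orderOf g), of ℤ G g ^ i) :
    bassElem g k m = of ℤ G g ^ a := by
  set d := (1 - (k : ℤ) ^ m) / (orderOf g : ℤ)
  have hu : bassElem g k m =
      of ℤ G g ^ a + (c + d) • ∑ i ∈ range (orderOf g), of ℤ G g ^ i := by
    rw [bassElem_eq_geom_sum, hS, add_smul, add_assoc]
  rcases Nat.eq_zero_or_pos (orderOf g) with h0 | hpos
  · rw [hu, h0, range_zero, sum_empty, smul_zero, add_zero]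
  · have hε := augmentation_bassElem g h
    rw [hu] at hε
    rw [map_add, map_pow, map_zsmul, augmentation_of, augmentation_geom_sum, one_pow,
      smul_eq_mul, add_eq_left, mul_eq_zero] at hε
    have : c + d = 0 := hε.resolve_right (by exact_mod_cast hpos.ne')
    rw [hu, this, zero_smul, add_zero]

theorem bassElem_eq_one_of_intModEq_one {g : G} {k m : ℕ} (h : k ^ m ≡ 1 [MOD orderOf g])
    (hk : (k : ℤ) ≡ 1 [ZMOD orderOf g]) : bassElem g k m = 1 := by
  obtain ⟨q, hq⟩ := exists_geom_sum_eq_add_zsmul_of_modEq (of_pow_orderOf g)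
    (Int.natCast_modEq_iff.1 hk)
  obtain ⟨c, hc⟩ := exists_pow_add_zsmul_geom_sum_pow (of_pow_orderOf g) 0 q m
  rw [sum_range_one] at hq
  rw [← hq, zero_mul] at hc
  rw [bassElem_eq_of_geom_sum_pow_eq h hc, pow_zero]

theorem bassElem_eq_of_intModEq_neg_one {g : G} {k m : ℕ} (h : k ^ m ≡ 1 [MOD orderOf g])
    (hk : (k : ℤ) ≡ -1 [ZMOD orderOf g]) (hm : Even m) :
    bassElem g k m = of ℤ G g ^ (k * m) := by
  have hk' : k + 1 ≡ 0 [MOD orderOf g] :=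
    Int.natCast_modEq_iff.1 (by simpa using hk.add_right 1)
  obtain ⟨q, hq⟩ := exists_geom_sum_eq_add_zsmul_of_modEq (of_pow_orderOf g) hk'
  obtain ⟨c, hc⟩ := exists_pow_add_zsmul_geom_sum_pow (of_pow_orderOf g) k (-q) m
  rw [sum_range_succ, sum_range_zero, zero_add, ← eq_sub_iff_add_eq] at hq
  rw [← hm.neg_pow, neg_add, ← neg_smul, neg_neg, ← sub_eq_neg_add, ← hq] at hc
  exact bassElem_eq_of_geom_sum_pow_eq h hc

theorem isOfFinOrder_bassElem_of_intModEq_neg_one {g : G} {k m : ℕ}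
    (h : k ^ m ≡ 1 [MOD orderOf g]) (hk : (k : ℤ) ≡ -1 [ZMOD orderOf g]) :
    IsOfFinOrder (bassElem g k m) := by
  rcases Nat.even_or_odd m with hm | hm
  · have hn : 0 < orderOf g := by
      refine Nat.pos_of_ne_zero fun h0 => ?_
      rw [h0, Nat.cast_zero, Int.modEq_zero_iff] at hk
      omega
    rw [bassElem_eq_of_intModEq_neg_one h hk hm]
    exact (isOfFinOrder_iff_pow_eq_one.2 ⟨_, hn, of_pow_orderOf g⟩).pow
  · have h1 : (1 : ℤ) ≡ -1 [ZMOD orderOf g] := by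
      have := (Int.natCast_modEq_iff.2 h).symm.trans (hk.pow m)
      rwa [Nat.cast_one, hm.neg_one_pow] at this
    rw [bassElem_eq_one_of_intModEq_one h (hk.trans h1.symm)]
    exact .one

end GroupRing

open ComplexConjugate in
theorem Complex.eq_or_eq_inv_of_norm_sub_one_eq {w z : ℂ} (hw : ‖w‖ = 1) (hz : ‖z‖ = 1)
    (h : ‖w - 1‖ = ‖z - 1‖) : w = z ∨ w = z⁻¹ := by
  have hw0 : w ≠ 0 := norm_ne_zero_iff.1 (by rw [hw]; exact one_ne_zero)
  have hz0 : z ≠ 0 := norm_ne_zero_iff.1 (by rw [hz]; exact one_ne_zero)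
  have key : (w - 1) * (w⁻¹ - 1) = (z - 1) * (z⁻¹ - 1) := by
    have hconj (u : ℂ) (hu : ‖u‖ = 1) : u⁻¹ - 1 = conj (u - 1) := by
      rw [map_sub, map_one, Complex.inv_eq_conj hu]
    rw [hconj w hw, hconj z hz, Complex.mul_conj', Complex.mul_conj', h]
  have : (w - z) * (w - z⁻¹) = 0 := by
    field_simp at key ⊢
    linear_combination -key
  rcases mul_eq_zero.1 this with h | h
  · exact .inl (sub_eq_zero.1 h)
  · exact .inr (sub_eq_zero.1 h)

theorem IsPrimitiveRoot.intModEq_one_or_neg_one_of_isOfFinOrder_geom_sum {ζ : ℂ} {n : ℕ}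
    (hζ : IsPrimitiveRoot ζ n) (hn : n ≠ 0) {k : ℕ}
    (hS : IsOfFinOrder (∑ i ∈ range k, ζ ^ i)) :
    (k : ℤ) ≡ 1 [ZMOD n] ∨ (k : ℤ) ≡ -1 [ZMOD n] := by
  have hζ1 := hζ.norm'_eq_one hn
  have hζ0 : ζ ≠ 0 := hζ.ne_zero hn
  have hdist : ‖ζ ^ k - 1‖ = ‖ζ - 1‖ := by
    rw [← geom_sum_mul, norm_mul, hS.norm_eq_one, one_mul]
  rcases Complex.eq_or_eq_inv_of_norm_sub_one_eq (by rw [norm_pow, hζ1, one_pow]) hζ1 hdist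
    with h | h
  · left
    refine (Int.modEq_iff_dvd.2 ((hζ.zpow_eq_one_iff_dvd _).1 ?_)).symm
    rw [zpow_sub_one₀ hζ0, zpow_natCast, h, mul_inv_cancel₀ hζ0]
  · right
    refine (Int.modEq_iff_dvd.2 ((hζ.zpow_eq_one_iff_dvd _).1 ?_)).symm
    rw [sub_neg_eq_add, zpow_add_one₀ hζ0, zpow_natCast, h, inv_mul_cancel₀ hζ0]

section CyclicModel

variable {G : Type*} [Group G]

noncomputable def zmodOrderOfHom (g : G) : Multiplicative (ZMod (orderOf g)) →* G :=
  AddMonoidHom.toMultiplicativeLeft <| ZMod.lift (orderOf g)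
    ⟨zmultiplesHom (Additive G) (Additive.ofMul g), by simp [← ofMul_pow]⟩

theorem zmodOrderOfHom_ofAdd_one (g : G) : zmodOrderOfHom g (Multiplicative.ofAdd 1) = g := by
  rw [← Int.cast_one (R := ZMod (orderOf g))]
  exact congrArg Additive.toMul (ZMod.lift_coe _ _ 1) |>.trans (by simp)

theorem zmodOrderOfHom_injective (g : G) : Function.Injective (zmodOrderOfHom g) := by
  intro a b hab
  rw [zmodOrderOfHom, AddMonoidHom.toMultiplicativeLeft_apply_apply,
    AddMonoidHom.toMultiplicativeLeft_apply_apply] at hab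
  refine (ZMod.lift_injective _).2 (fun j hj => ?_) (Additive.toMul.injective hab)
  rw [ZMod.intCast_zmod_eq_zero_iff_dvd, orderOf_dvd_iff_zpow_eq_one]
  simpa [← ofMul_zpow] using hj

theorem mapDomainRingHom_bassElem {H : Type*} [Group H] {f : G →* H}
    (hf : Function.Injective f) (g : G) (k m : ℕ) :
    mapDomainRingHom ℤ f (bassElem g k m) = bassElem (f g) k m := by
  have hof (x : G) : mapDomainRingHom ℤ f (of ℤ G x) = of ℤ H (f x) := by simp
  simp only [bassElem_eq_geom_sum, map_add, map_pow, map_sum, map_zsmul, hof,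
    orderOf_injective f hf g]

end CyclicModel

section Detection

variable {G : Type*} [Group G]

theorem map_bassElem_of_map_of_ne_one {R : Type*} [Ring R] [NoZeroDivisors R]
    (φ : MonoidAlgebra ℤ G →+* R) {g : G} (hg : φ (of ℤ G g) ≠ 1) (k m : ℕ) :
    φ (bassElem g k m) = (∑ i ∈ range k, φ (of ℤ G g) ^ i) ^ m := by
  have hσ : ∑ i ∈ range (orderOf g), φ (of ℤ G g) ^ i = 0 := by
    have h := mul_geom_sum (φ (of ℤ G g)) (orderOf g)
    rw [← map_pow, of_pow_orderOf, map_one, sub_self] at h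
    exact (mul_eq_zero.1 h).resolve_left (sub_ne_zero.2 hg)
  simp only [bassElem_eq_geom_sum, map_add, map_pow, map_sum, map_zsmul, hσ, smul_zero, add_zero]

theorem intModEq_one_or_neg_one_of_isOfFinOrder_bassElem {g : G} (hg : 1 < orderOf g)
    {k m : ℕ} (hm : m ≠ 0) (hu : IsOfFinOrder (bassElem g k m)) :
    (k : ℤ) ≡ 1 [ZMOD orderOf g] ∨ (k : ℤ) ≡ -1 [ZMOD orderOf g] := by
  have hn : orderOf g ≠ 0 := by omega
  have : NeZero (orderOf g) := ⟨hn⟩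
  set c : Multiplicative (ZMod (orderOf g)) := Multiplicative.ofAdd 1
  have hc : IsOfFinOrder (bassElem c k m) := by
    have hinj : Function.Injective (mapDomainRingHom ℤ (zmodOrderOfHom g)) :=
      mapDomain_injective (zmodOrderOfHom_injective g)
    rw [← zmodOrderOfHom_ofAdd_one g,
      ← mapDomainRingHom_bassElem (zmodOrderOfHom_injective g)] at hu
    exact (hinj.isOfFinOrder_iff (f := (mapDomainRingHom ℤ (zmodOrderOfHom g)).toMonoidHom)).1 hu
  have hζ := Complex.isPrimitiveRoot_exp (orderOf g) hn
  set ζ := Complex.exp (2 * Real.pi * Complex.I / orderOf g)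
  let χ : MonoidAlgebra ℤ (Multiplicative (ZMod (orderOf g))) →+* ℂ :=
    (MonoidAlgebra.lift ℤ ℂ _ (AddChar.zmodChar _ hζ.pow_eq_one).toMonoidHom).toRingHom
  have hχ : χ (of ℤ _ c) = ζ := by
    simpa [χ, c] using AddChar.zmodChar_apply' hζ.pow_eq_one 1
  have hχu := map_bassElem_of_map_of_ne_one χ (by rw [hχ]; exact hζ.ne_one hg) k m
  rw [hχ] at hχu
  have hS : IsOfFinOrder (χ (bassElem c k m)) := χ.toMonoidHom.isOfFinOrder hc
  rw [hχu] at hS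
  exact hζ.intModEq_one_or_neg_one_of_isOfFinOrder_geom_sum hn (hS.of_pow hm)

end Detection

theorem bassElem_finite_order_iff_general {G : Type*} [Group G] (g : G) (k m : ℕ)
    (hm : 0 < m) (h : k ^ m ≡ 1 [MOD orderOf g]) :
    (∃ j : ℕ, 0 < j ∧ bassElem g k m ^ j = 1) ↔
      ((k : ℤ) ≡ 1 [ZMOD (orderOf g : ℤ)] ∨ (k : ℤ) ≡ -1 [ZMOD (orderOf g : ℤ)]) := by
  rw [← isOfFinOrder_iff_pow_eq_one]
  refine ⟨fun hu => ?_, ?_⟩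
  · obtain h0 | h1 | hg : orderOf g = 0 ∨ orderOf g = 1 ∨ 1 < orderOf g := by omega
    · rw [h0, Nat.modEq_zero_iff, pow_eq_one_iff, or_iff_left hm.ne'] at h
      simp [h]
    · simp [h1, Int.modEq_one]
    · exact intModEq_one_or_neg_one_of_isOfFinOrder_bassElem hg hm.ne' hu
  · rintro (hk | hk)
    · rw [bassElem_eq_one_of_intModEq_one h hk]
      exact .one
    · exact isOfFinOrder_bassElem_of_intModEq_neg_one h hk

theorem bassElem_finite_order_iff {G : Type*} [Group G] [Fintype G] (g : G) (k m : ℕ)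
    (hk : 0 < k) (hm : 0 < m) (h : k ^ m ≡ 1 [MOD orderOf g]) :
    (∃ j : ℕ, 0 < j ∧ bassElem g k m ^ j = 1) ↔
      ((k : ℤ) ≡ 1 [ZMOD (orderOf g : ℤ)] ∨ (k : ℤ) ≡ -1 [ZMOD (orderOf g : ℤ)]) :=
  bassElem_finite_order_iff_general g k m hm h
end

section
/- Let G be a finite group, M a normal subgroup of G, g ∈ G, and k, m positive integers with gcd(k, |g|) = 1 and k^m ≡ 1 (mod |g|). Then in ℚG, the Bass-type unit based on the element 1 - M̂ + gM̂ satisfies u_k,m(1 - M̂ + gM̂) = (1 - M̂) + u_k,m(g)·M̂, where M̂ = (1/|M|)∑_{x∈M} x. -/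
/-- The Bass-type element `u_{k,m}(x)` based on a ring element `x` (of order dividing
some reference order `n`): `(1+x+⋯+x^{k-1})^m + ((1-k^m)/n)(1+x+⋯+x^{n-1})`. -/
noncomputable def bassOf {A : Type*} [Ring A] (x : A) (n k m : ℕ) : A :=
  (∑ i ∈ Finset.range k, x ^ i) ^ m +
    ((1 - (k : ℤ) ^ m) / (n : ℤ)) • ∑ i ∈ Finset.range n, x ^ i

open scoped Classical in
/-- The central idempotent `M̂ = (1/|M|) ∑_{x ∈ M} x` of `ℚG`. -/
noncomputable def subgroupAverage {G : Type*} [Group G] [Fintype G]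
    (M : Subgroup G) : MonoidAlgebra ℚ G :=
  (Nat.card M : ℚ)⁻¹ • ∑ x : M, MonoidAlgebra.of ℚ G (x : G)

section RingLemma
variable {A : Type*} [Ring A]

/-- Multiplication rule for elements written along the idempotent decomposition. -/
lemma key_mul (e c c' d d' : A) (he : e * e = e)
    (hd : Commute d e) (hd' : Commute d' e) :
    (c * (1 - e) + c' * e) * (d * (1 - e) + d' * e) =
      (c * d) * (1 - e) + (c' * d') * e := by
  have hd1 : Commute d (1 - e) := (Commute.one_right d).sub_right hd
  have h2 : (1 - e) * (1 - e) = 1 - e := by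
    rw [sub_mul, one_mul, mul_sub, mul_one, he, sub_self, sub_zero]
  have h1 : (1 - e) * (d * (1 - e)) = d * (1 - e) := by
    rw [← mul_assoc, hd1.symm.eq, mul_assoc, h2]
  have h3 : (1 - e) * (d' * e) = 0 := by
    rw [sub_mul, one_mul, ← mul_assoc, ← hd'.eq, mul_assoc, he, sub_self]
  have h4 : e * (d * (1 - e)) = 0 := by
    rw [← mul_assoc, hd.symm.eq, mul_assoc, mul_sub, mul_one, he, sub_self, mul_zero]
  have h5 : e * (d' * e) = d' * e := by
    rw [← mul_assoc, hd'.symm.eq, mul_assoc, he]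
  calc (c * (1 - e) + c' * e) * (d * (1 - e) + d' * e)
      = c * ((1 - e) * (d * (1 - e))) + c * ((1 - e) * (d' * e))
        + (c' * (e * (d * (1 - e))) + c' * (e * (d' * e))) := by
        simp only [add_mul, mul_add, mul_assoc]; abel
    _ = (c * d) * (1 - e) + (c' * d') * e := by
        rw [h1, h3, h4, h5, mul_zero, mul_zero, add_zero, zero_add, ← mul_assoc,
          ← mul_assoc]

/-- The Bass-type element based on `1 - e + a*e` for a commuting idempotent `e`. -/
lemma bassOf_idem (a e : A) (he : e * e = e) (hc : Commute a e) (n k m : ℕ)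
    (hdvd : (n : ℤ) ∣ 1 - (k : ℤ) ^ m) :
    bassOf (1 - e + a * e) n k m = (1 - e) + bassOf a n k m * e := by
  set z : ℤ := (1 - (k : ℤ) ^ m) / (n : ℤ) with hz
  have hb : ∀ K : ℕ, Commute (∑ i ∈ Finset.range K, a ^ i) e :=
    fun K => Commute.sum_left _ _ _ (fun i _ => hc.pow_left i)
  have hpow : ∀ i : ℕ, (1 - e + a * e) ^ i = 1 * (1 - e) + a ^ i * e := by
    intro i
    induction i with
    | zero => simp
    | succ i ih =>
      have h2 : (1:A) - e + a * e = 1 * (1 - e) + a * e := by rw [one_mul]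
      rw [pow_succ, ih, h2, key_mul e 1 (a ^ i) 1 a he (Commute.one_left e) hc,
        mul_one, ← pow_succ]
  have hsum : ∀ K : ℕ, ∑ i ∈ Finset.range K, (1 - e + a * e) ^ i =
      ((K : ℤ) • (1:A)) * (1 - e) + (∑ i ∈ Finset.range K, a ^ i) * e := by
    intro K
    calc ∑ i ∈ Finset.range K, (1 - e + a * e) ^ i
        = ∑ i ∈ Finset.range K, (1 * (1 - e) + a ^ i * e) :=
          Finset.sum_congr rfl fun i _ => hpow i
      _ = ((K : ℤ) • (1:A)) * (1 - e) + (∑ i ∈ Finset.range K, a ^ i) * e := by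
          rw [Finset.sum_add_distrib, ← Finset.sum_mul, ← Finset.sum_mul,
            Finset.sum_const, Finset.card_range]
          simp [natCast_zsmul]
  have hpowm : ∀ j : ℕ,
      (((k : ℤ) • (1:A)) * (1 - e) + (∑ i ∈ Finset.range k, a ^ i) * e) ^ j
      = (((k:ℤ) ^ j) • (1:A)) * (1 - e) + (∑ i ∈ Finset.range k, a ^ i) ^ j * e := by
    intro j
    induction j with
    | zero => simp
    | succ j ih =>
      have hmul1 : ((k:ℤ)^j • (1:A)) * ((k:ℤ) • (1:A)) = ((k:ℤ)^(j+1)) • (1:A) := by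
        rw [smul_mul_smul_comm, mul_one, ← pow_succ]
      rw [pow_succ, ih,
        key_mul e _ _ _ _ he (Commute.smul_left (Commute.one_left e) _) (hb k),
        hmul1, ← pow_succ]
  unfold bassOf
  rw [hsum k, hsum n, hpowm m, smul_add]
  rw [← smul_mul_assoc, ← smul_mul_assoc, smul_smul,
    Int.ediv_mul_cancel hdvd]
  rw [add_add_add_comm, ← add_mul, ← add_smul]
  have h1 : ((k:ℤ)^m + (1 - (k:ℤ)^m)) = 1 := by ring
  rw [h1, one_smul, one_mul, ← add_mul]

end RingLemma

section GroupAlgebra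
variable {G : Type*} [Group G] [Fintype G] (M : Subgroup G)

lemma subgroupAverage_idem :
    subgroupAverage M * subgroupAverage M = subgroupAverage M := by
  classical
  unfold subgroupAverage
  rw [smul_mul_smul_comm, Finset.sum_mul_sum]
  have hss : ∑ x : M, ∑ y : M, MonoidAlgebra.of ℚ G (x : G) * MonoidAlgebra.of ℚ G (y : G)
      = (Nat.card M : ℚ) • ∑ y : M, MonoidAlgebra.of ℚ G (y : G) := by
    have hinner : ∀ x : M, ∑ y : M, MonoidAlgebra.of ℚ G (x : G) * MonoidAlgebra.of ℚ G (y : G)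
        = ∑ y : M, MonoidAlgebra.of ℚ G (y : G) := by
      intro x
      rw [← Equiv.sum_comp (Equiv.mulLeft x) (fun y : M => MonoidAlgebra.of ℚ G (y : G))]
      refine Finset.sum_congr rfl fun y _ => ?_
      rw [← map_mul]
      rfl
    rw [Finset.sum_congr rfl fun x _ => hinner x, Finset.sum_const, Finset.card_univ,
      Nat.card_eq_fintype_card]
    rw [Nat.cast_smul_eq_nsmul]
  rw [hss, smul_smul]
  congr 1
  have hM0 : (Nat.card M : ℚ) ≠ 0 := by
    exact_mod_cast Nat.card_pos.ne'
  field_simp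

lemma subgroupAverage_comm (hM : M.Normal) (g : G) :
    Commute (MonoidAlgebra.of ℚ G g) (subgroupAverage M) := by
  classical
  haveI := hM
  unfold Commute SemiconjBy subgroupAverage
  rw [mul_smul_comm, smul_mul_assoc, Finset.mul_sum, Finset.sum_mul]
  congr 1
  rw [← Equiv.sum_comp (MulAut.conjNormal g).toEquiv
    (fun x : M => MonoidAlgebra.of ℚ G (x : G) * MonoidAlgebra.of ℚ G g)]
  refine Finset.sum_congr rfl fun x _ => ?_
  rw [← map_mul, ← map_mul]
  congr 1
  show g * (x : G) = ((MulAut.conjNormal g x : M) : G) * g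
  rw [MulAut.conjNormal_apply]
  group

end GroupAlgebra

theorem bassOf_one_sub_average_add {G : Type*} [Group G] [Fintype G]
    (M : Subgroup G) (hM : M.Normal) (g : G) (k m : ℕ)
    (hk : 0 < k) (hm : 0 < m) (hgcd : Nat.gcd k (orderOf g) = 1)
    (h : k ^ m ≡ 1 [MOD orderOf g]) :
    bassOf (1 - subgroupAverage M + MonoidAlgebra.of ℚ G g * subgroupAverage M)
        (orderOf g) k m =
      (1 - subgroupAverage M) +
        bassOf (MonoidAlgebra.of ℚ G g) (orderOf g) k m * subgroupAverage M := by
  have hdvd : ((orderOf g : ℤ)) ∣ 1 - (k : ℤ) ^ m := by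
    have := h.dvd
    push_cast at this
    exact this
  exact bassOf_idem _ _ (subgroupAverage_idem M) (subgroupAverage_comm M hM g)
    (orderOf g) k m hdvd
end

section
/- Let G be a finite group, g ∈ G, u a unit of ℤ⟨g⟩, and 𝒩 : ⟨g⟩ = N₀ ⊴ N₁ ⊴ ... ⊴ N_m = G a subnormal series. Define c⁰(u) = u and cⁱ(u) = ∏_{h ∈ T_i} (cⁱ⁻¹(u))^h where T_i is a transversal of N_{i-1} in N_i. Then for every x ∈ N_{i-1}, (cⁱ⁻¹(u))^x = cⁱ⁻¹(u); in particular cⁱ⁻¹(u) is central in ℤN_{i-1} and cⁱ(u) is independent of the choice of transversal T_i. -/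
/-- Conjugation `a^h = h⁻¹ a h` of group-ring elements by group elements. -/
noncomputable def conjBy {G : Type*} [Group G] (h : G) (a : MonoidAlgebra ℤ G) :
    MonoidAlgebra ℤ G :=
  MonoidAlgebra.of ℤ G h⁻¹ * a * MonoidAlgebra.of ℤ G h

/-- A subnormal series `⟨g⟩ = N₀ ⊴ N₁ ⊴ ⋯ ⊴ N_len = G`. -/
structure SubnormalSeries (G : Type*) [Group G] (g : G) where
  len : ℕ
  N : ℕ → Subgroup G
  bot_eq : N 0 = Subgroup.zpowers g
  top_eq : N len = ⊤
  le_succ : ∀ i, N i ≤ N (i + 1)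
  conj_mem : ∀ i, ∀ x ∈ N (i + 1), ∀ y ∈ N i, x⁻¹ * y * x ∈ N i

/-- A choice, for each `i`, of a (right) transversal `T i` of `N i` in `N (i+1)`,
recorded as a duplicate-free list. -/
structure TransversalSystem {G : Type*} [Group G] {g : G}
    (S : SubnormalSeries G g) where
  T : ℕ → List G
  nodup : ∀ i, (T i).Nodup
  mem : ∀ i, ∀ t ∈ T i, t ∈ S.N (i + 1)
  rep : ∀ i, ∀ y ∈ S.N (i + 1), ∃! t, t ∈ T i ∧ y * t⁻¹ ∈ S.N i

/-- The construction `c⁰(u) = u`, `cⁱ(u) = ∏_{h ∈ T i} (cⁱ⁻¹(u))^h`. -/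
noncomputable def cSeq {G : Type*} [Group G] {g : G} (S : SubnormalSeries G g)
    (TS : TransversalSystem S) (u : MonoidAlgebra ℤ G) : ℕ → MonoidAlgebra ℤ G
  | 0 => u
  | i + 1 => ((TS.T i).map fun h => conjBy h (cSeq S TS u i)).prod

/-!
Induct along the series with the invariant that `cⁱ(u)` lies in `ℤNᵢ` and is fixed by
conjugation by `Nᵢ`, i.e. is central in `ℤNᵢ` (for `i = 0` because `⟨g⟩` is abelian). As `Nᵢ` is
normal in `Nᵢ₊₁`, the conjugates `cⁱ(u)^t` with `t ∈ Nᵢ₊₁` lie in `ℤNᵢ`, so they commute pairwise,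
and they depend only on the coset `Nᵢ t`; hence their product over a transversal does not depend
on the transversal. Right multiplication by `x ∈ Nᵢ₊₁` permutes transversals, which shows that
`cⁱ⁺¹(u)` is fixed by `Nᵢ₊₁`.
-/

open MonoidAlgebra

structure IsRightTransversalList {G : Type*} [Group G] (H K : Subgroup G) (L : List G) :
    Prop where
  nodup : L.Nodup
  mem : ∀ t ∈ L, t ∈ K
  existsUnique : ∀ y ∈ K, ∃! t, t ∈ L ∧ y * t⁻¹ ∈ H

namespace IsRightTransversalList

variable {G : Type*} [Group G] {H K : Subgroup G} {L L' : List G}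

local notation "coset" => Quotient.mk (QuotientGroup.rightRel H)

lemma nodup_map_coset (hL : IsRightTransversalList H K L) : (L.map coset).Nodup := by
  refine hL.nodup.map_on fun s hs t ht hst => ?_
  have hts : s * t⁻¹ ∈ H := QuotientGroup.rightRel_apply.1 (Quotient.eq.1 hst.symm)
  exact (hL.existsUnique s (hL.mem s hs)).unique ⟨hs, by simp⟩ ⟨ht, hts⟩

lemma map_coset_subset (hL : IsRightTransversalList H K L) (hL' : IsRightTransversalList H K L') :
    L.map coset ⊆ L'.map coset := by
  intro c hc
  obtain ⟨y, hy, rfl⟩ := List.mem_map.1 hc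
  obtain ⟨t, ⟨ht, hyt⟩, -⟩ := hL'.existsUnique y (hL.mem y hy)
  exact List.mem_map.2 ⟨t, ht, Quotient.eq.2 (QuotientGroup.rightRel_apply.2 hyt)⟩

lemma perm_map_coset (hL : IsRightTransversalList H K L) (hL' : IsRightTransversalList H K L') :
    (L.map coset).Perm (L'.map coset) :=
  (List.perm_ext_iff_of_nodup hL.nodup_map_coset hL'.nodup_map_coset).2 fun _ =>
    ⟨(hL.map_coset_subset hL' ·), (hL'.map_coset_subset hL ·)⟩

lemma prod_map_eq {M : Type*} [Monoid M] {f : G → M} (hf : ∀ h ∈ H, ∀ t, f (h * t) = f t)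
    (hcomm : ∀ s ∈ K, ∀ t ∈ K, Commute (f s) (f t))
    (hL : IsRightTransversalList H K L) (hL' : IsRightTransversalList H K L') :
    (L.map f).prod = (L'.map f).prod := by
  let f' : Quotient (QuotientGroup.rightRel H) → M := Quotient.lift f fun s t hst => by
    rw [← hf _ (QuotientGroup.rightRel_apply.1 hst) s, inv_mul_cancel_right]
  have hmap : ∀ l : List G, l.map f = (l.map coset).map f' := fun l => by
    rw [List.map_map]; rfl
  rw [hmap, hmap]
  refine (hL.perm_map_coset hL').map f' |>.prod_eq' ?_
  rw [← hmap, List.pairwise_map]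
  exact List.pairwise_of_forall_mem_list fun s hs t ht => hcomm s (hL.mem s hs) t (hL.mem t ht)

lemma map_mul_right (hL : IsRightTransversalList H K L) {x : G} (hx : x ∈ K) :
    IsRightTransversalList H K (L.map (· * x)) where
  nodup := hL.nodup.map fun _ _ => mul_right_cancel
  mem := by
    simp only [List.mem_map]
    rintro _ ⟨t, ht, rfl⟩
    exact mul_mem (hL.mem t ht) hx
  existsUnique y hy := by
    obtain ⟨t, ⟨ht, hyt⟩, hunique⟩ := hL.existsUnique (y * x⁻¹) (mul_mem hy (inv_mem hx))
    refine ⟨t * x, ⟨List.mem_map.2 ⟨t, ht, rfl⟩, by simpa [mul_assoc] using hyt⟩, ?_⟩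
    rintro _ ⟨hsx, hys⟩
    obtain ⟨s, hs, rfl⟩ := List.mem_map.1 hsx
    rw [hunique s ⟨hs, by simpa [mul_assoc] using hys⟩]

end IsRightTransversalList

section conjBy

variable {G : Type*} [Group G]

lemma of_mul_of_inv (x : G) : of ℤ G x * of ℤ G x⁻¹ = 1 := by
  rw [← map_mul, mul_inv_cancel, map_one]

lemma of_inv_mul_of (x : G) : of ℤ G x⁻¹ * of ℤ G x = 1 := by
  rw [← map_mul, inv_mul_cancel, map_one]

lemma conjBy_one (x : G) : conjBy x (1 : MonoidAlgebra ℤ G) = 1 := by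
  rw [conjBy, mul_one, of_inv_mul_of]

lemma conjBy_mul (x : G) (a b : MonoidAlgebra ℤ G) :
    conjBy x (a * b) = conjBy x a * conjBy x b := by
  simp only [conjBy, mul_assoc]
  rw [← mul_assoc (of ℤ G x), of_mul_of_inv, one_mul]

lemma conjBy_conjBy (x y : G) (a : MonoidAlgebra ℤ G) :
    conjBy y (conjBy x a) = conjBy (x * y) a := by
  simp only [conjBy, mul_inv_rev, map_mul, mul_assoc]

lemma conjBy_list_prod (x : G) (l : List (MonoidAlgebra ℤ G)) :
    conjBy x l.prod = (l.map (conjBy x)).prod := by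
  induction l with
  | nil => exact conjBy_one x
  | cons a l ih => rw [List.prod_cons, conjBy_mul, ih, List.map_cons, List.prod_cons]

lemma conjBy_eq_self_iff_commute {x : G} {a : MonoidAlgebra ℤ G} :
    conjBy x a = a ↔ Commute (of ℤ G x) a := by
  constructor
  · intro h
    calc of ℤ G x * a = of ℤ G x * conjBy x a := by rw [h]
      _ = a * of ℤ G x := by rw [conjBy, ← mul_assoc, ← mul_assoc, of_mul_of_inv, one_mul]
  · intro h
    rw [conjBy, mul_assoc, ← h.eq, ← mul_assoc, of_inv_mul_of, one_mul]

lemma commute_of_mem_supported {c b : MonoidAlgebra ℤ G} {s : Set G}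
    (hc : ∀ y ∈ s, Commute c (of ℤ G y)) (hb : b ∈ supported ℤ ℤ s) : Commute c b := by
  have hspan : b ∈ Submodule.span ℤ (of ℤ G '' s) :=
    Submodule.span_mono (Set.image_mono hb) (mem_span_support_coeff b)
  clear hb
  induction hspan using Submodule.span_induction with
  | mem _ hy => obtain ⟨y, hy, rfl⟩ := hy; exact hc y hy
  | zero => exact Commute.zero_right c
  | add _ _ _ _ h₁ h₂ => exact h₁.add_right h₂
  | smul n _ _ h => exact h.smul_right n

lemma conjBy_mem_supported {N : Subgroup G} {x : G} (hx : ∀ y ∈ N, x⁻¹ * y * x ∈ N)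
    {a : MonoidAlgebra ℤ G} (ha : a ∈ supported ℤ ℤ (N : Set G)) : conjBy x a ∈ supported ℤ ℤ (N : Set G) := by
  classical
  intro z hz
  obtain ⟨w, hw, rfl⟩ := Finset.mem_image.1 (support_coeff_mul_single_subset _ _ _ hz)
  obtain ⟨y, hy, rfl⟩ := Finset.mem_image.1 (support_coeff_single_mul_subset _ _ _ hw)
  exact hx y (ha hy)

lemma list_prod_mem_supported {N : Submonoid G} {l : List (MonoidAlgebra ℤ G)}
    (hl : ∀ a ∈ l, a ∈ supported ℤ ℤ (N : Set G)) : l.prod ∈ supported ℤ ℤ (N : Set G) := by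
  classical
  induction l with
  | nil =>
    intro y hy
    rw [Finset.mem_coe, List.prod_nil] at hy
    rw [Finset.mem_one.1 (support_coeff_one_subset hy)]
    exact one_mem N
  | cons a l ih =>
    intro y hy
    obtain ⟨a', ha', b', hb', rfl⟩ := Finset.mem_mul.1 (support_coeff_mul_subset _ _ hy)
    exact mul_mem (hl a List.mem_cons_self ha')
      (ih (fun b hb => hl b (List.mem_cons_of_mem a hb)) hb')

end conjBy

section Normalizing

variable {G : Type*} [Group G] {H K : Subgroup G} {a : MonoidAlgebra ℤ G}

lemma commute_of_forall_conjBy_eq (hfix : ∀ x ∈ H, conjBy x a = a) {b : MonoidAlgebra ℤ G}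
    (hb : b ∈ supported ℤ ℤ (H : Set G)) : Commute a b :=
  commute_of_mem_supported (fun y hy => (conjBy_eq_self_iff_commute.1 (hfix y hy)).symm) hb

lemma commute_conjBy_conjBy (hHK : ∀ x ∈ K, ∀ y ∈ H, x⁻¹ * y * x ∈ H)
    (ha : a ∈ supported ℤ ℤ (H : Set G)) (hfix : ∀ x ∈ H, conjBy x a = a)
    {s t : G} (hs : s ∈ K) (ht : t ∈ K) : Commute (conjBy s a) (conjBy t a) := by
  set b := conjBy (t * s⁻¹) a
  have hb : conjBy s b = conjBy t a := by rw [conjBy_conjBy, inv_mul_cancel_right]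
  have hab : Commute a b :=
    commute_of_forall_conjBy_eq hfix (conjBy_mem_supported (hHK _ (mul_mem ht (inv_mem hs))) ha)
  calc conjBy s a * conjBy t a = conjBy s (a * b) := by rw [conjBy_mul, hb]
    _ = conjBy s (b * a) := by rw [hab.eq]
    _ = conjBy t a * conjBy s a := by rw [conjBy_mul, hb]

lemma list_prod_conjBy_eq (hHK : ∀ x ∈ K, ∀ y ∈ H, x⁻¹ * y * x ∈ H)
    (ha : a ∈ supported ℤ ℤ (H : Set G)) (hfix : ∀ x ∈ H, conjBy x a = a)
    {L₁ L₂ : List G} (h₁ : IsRightTransversalList H K L₁) (h₂ : IsRightTransversalList H K L₂) :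
    (L₁.map fun t => conjBy t a).prod = (L₂.map fun t => conjBy t a).prod :=
  h₁.prod_map_eq (fun h hh t => by rw [← conjBy_conjBy, hfix h hh])
    (fun _ hs _ ht => commute_conjBy_conjBy hHK ha hfix hs ht) h₂

lemma list_prod_conjBy_mem_supported (hHK : ∀ x ∈ K, ∀ y ∈ H, x⁻¹ * y * x ∈ H) (hHK' : H ≤ K)
    (ha : a ∈ supported ℤ ℤ (H : Set G)) {L : List G} (hL : IsRightTransversalList H K L) :
    (L.map fun t => conjBy t a).prod ∈ supported ℤ ℤ (K : Set G) := by
  refine list_prod_mem_supported (N := K.toSubmonoid) fun b hb => ?_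
  obtain ⟨t, ht, rfl⟩ := List.mem_map.1 hb
  exact supported_mono hHK' (conjBy_mem_supported (hHK t (hL.mem t ht)) ha)

lemma conjBy_list_prod_conjBy (hHK : ∀ x ∈ K, ∀ y ∈ H, x⁻¹ * y * x ∈ H)
    (ha : a ∈ supported ℤ ℤ (H : Set G)) (hfix : ∀ x ∈ H, conjBy x a = a)
    {L : List G} (hL : IsRightTransversalList H K L) {x : G} (hx : x ∈ K) :
    conjBy x (L.map fun t => conjBy t a).prod = (L.map fun t => conjBy t a).prod := by
  have hshift : (L.map fun t => conjBy t a).map (conjBy x) =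
      (L.map (· * x)).map fun t => conjBy t a := by
    simp only [List.map_map, Function.comp_def, conjBy_conjBy]
  rw [conjBy_list_prod, hshift]
  exact list_prod_conjBy_eq hHK ha hfix (hL.map_mul_right hx) hL

end Normalizing

lemma conjBy_eq_self_of_mem_zpowers {G : Type*} [Group G] {g x : G}
    (hx : x ∈ Subgroup.zpowers g) {a : MonoidAlgebra ℤ G}
    (ha : a ∈ supported ℤ ℤ (Subgroup.zpowers g : Set G)) : conjBy x a = a := by
  refine conjBy_eq_self_iff_commute.2 (commute_of_mem_supported (fun y hy => ?_) ha)
  obtain ⟨m, rfl⟩ := hx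
  obtain ⟨k, rfl⟩ := hy
  exact ((Commute.refl g).zpow_zpow m k).map (of ℤ G)

theorem cSeq_fixed_and_transversal_independent_general {G : Type*} [Group G]
    (g : G) (S : SubnormalSeries G g) (TS : TransversalSystem S)
    (u : MonoidAlgebra ℤ G)
    (hsupp : (u.coeff.support : Set G) ⊆ (Subgroup.zpowers g : Subgroup G)) :
    (∀ i < S.len, ∀ x ∈ S.N i, conjBy x (cSeq S TS u i) = cSeq S TS u i) ∧
      (∀ i < S.len, ∀ L : List G, L.Nodup → (∀ t ∈ L, t ∈ S.N (i + 1)) →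
        (∀ y ∈ S.N (i + 1), ∃! t, t ∈ L ∧ y * t⁻¹ ∈ S.N i) →
        (L.map fun h => conjBy h (cSeq S TS u i)).prod = cSeq S TS u (i + 1)) := by
  have hT : ∀ i, IsRightTransversalList (S.N i) (S.N (i + 1)) (TS.T i) :=
    fun i => ⟨TS.nodup i, TS.mem i, TS.rep i⟩
  have hcentral : ∀ i, cSeq S TS u i ∈ supported ℤ ℤ (S.N i : Set G) ∧
      ∀ x ∈ S.N i, conjBy x (cSeq S TS u i) = cSeq S TS u i := by
    intro i
    induction i with
    | zero =>
      rw [S.bot_eq]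
      exact ⟨hsupp, fun x hx => conjBy_eq_self_of_mem_zpowers hx hsupp⟩
    | succ i ih =>
      exact ⟨list_prod_conjBy_mem_supported (S.conj_mem i) (S.le_succ i) ih.1 (hT i),
        fun x hx => conjBy_list_prod_conjBy (S.conj_mem i) ih.1 ih.2 (hT i) hx⟩
  exact ⟨fun i _ => (hcentral i).2, fun i _ L hn hm hr =>
    list_prod_conjBy_eq (S.conj_mem i) (hcentral i).1 (hcentral i).2 ⟨hn, hm, hr⟩ (hT i)⟩

theorem cSeq_fixed_and_transversal_independent {G : Type*} [Group G] [Fintype G]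
    (g : G) (S : SubnormalSeries G g) (TS : TransversalSystem S)
    (u : MonoidAlgebra ℤ G) (hu : IsUnit u)
    (hsupp : (u.coeff.support : Set G) ⊆ (Subgroup.zpowers g : Subgroup G)) :
    (∀ i < S.len, ∀ x ∈ S.N i, conjBy x (cSeq S TS u i) = cSeq S TS u i) ∧
      (∀ i < S.len, ∀ L : List G, L.Nodup → (∀ t ∈ L, t ∈ S.N (i + 1)) →
        (∀ y ∈ S.N (i + 1), ∃! t, t ∈ L ∧ y * t⁻¹ ∈ S.N i) →
        (L.map fun h => conjBy h (cSeq S TS u i)).prod = cSeq S TS u (i + 1)) :=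
  cSeq_fixed_and_transversal_independent_general g S TS u hsupp
end
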